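/- arXiv:0707.3404 — 2 statements merged into one kernel-verified Lean document; each statement's English description precedes it below -/
import Mathlib

section
/- Let ξ₀, ξ₁, …, ξ_{n+1} span a fan, with n ≥ 1. Then there exists an index i with 0 < i < n+1 such that ξ_i = ξ_{i−1} + ξ_{i+1} and such that the sequence of n+1 vectors obtained by deleting ξ_i, namely ξ₀, …, ξ_{i−1}, ξ_{i+1}, …, ξ_{n+1}, again spans a fan. (In other words, every fan consisting of n+1 cones is a subdivision of a fan consisting of n cones, obtained by splitting one cone σ[ξ,ν] into the two cones σ[ξ,ξ+ν] and σ[ξ+ν,ν].) -/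
/-!
Take a vector `ξ_i` of maximal coordinate sum `|ξ_i|`. Since `n ≥ 1`, the vector `ξ₁` has
`|ξ₁| ≥ 2`, so `i` is an interior index. The two unimodularity relations around `ξ_i` give
`ξ_{i-1} + ξ_{i+1} = d • ξ_i` with `d = det(ξ_{i-1}, ξ_{i+1})`, hence
`2 ≤ d |ξ_i| ≤ 2 |ξ_i|`. The case `d = 2` forces `|ξ_{i-1}| = |ξ_i|`, and then
`det(ξ_{i-1}, ξ_i)` is a multiple of `|ξ_i| ≥ 2`, which is absurd. So `d = 1`: `ξ_i` is the
sum of its neighbours, and these form a unimodular pair, so deleting `ξ_i` leaves a fan.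
-/

/-- det(ξ,ν) = ξ₁ν₂ − ξ₂ν₁ for ξ, ν ∈ ℤ². -/
def det2 (ξ ν : ℤ × ℤ) : ℤ := ξ.1 * ν.2 - ξ.2 * ν.1

/-- A sequence ξ₀, …, ξₙ of vectors in ℤ² with nonnegative coordinates spans a fan if
ξ₀ = (1,0), ξₙ = (0,1) and det(ξ_{i−1}, ξ_i) = 1 for all 1 ≤ i ≤ n. -/
def SpansFan (n : ℕ) (ξ : ℕ → ℤ × ℤ) : Prop :=
  (∀ i ≤ n, 0 ≤ (ξ i).1 ∧ 0 ≤ (ξ i).2) ∧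
  ξ 0 = (1, 0) ∧ ξ n = (0, 1) ∧
  ∀ i, 1 ≤ i → i ≤ n → det2 (ξ (i - 1)) (ξ i) = 1

def coordSum (v : ℤ × ℤ) : ℤ := v.1 + v.2

theorem add_eq_det2_smul_of_det2_eq_one {a b c : ℤ × ℤ} (hab : det2 a b = 1)
    (hbc : det2 b c = 1) : a + c = det2 a c • b := by
  unfold det2 at *
  ext <;> simp only [Prod.fst_add, Prod.snd_add, Prod.smul_fst, Prod.smul_snd, smul_eq_mul]
  · linear_combination (-c.1) * hab + (-a.1) * hbc
  · linear_combination (-c.2) * hab + (-a.2) * hbc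

theorem det2_eq_coordSum_mul_of_coordSum_eq {a b : ℤ × ℤ} (h : coordSum a = coordSum b) :
    det2 a b = coordSum b * (a.1 - b.1) := by
  unfold det2 coordSum at *
  linear_combination (-b.1) * h

theorem coordSum_ne_of_det2_eq_one {a b : ℤ × ℤ} (hab : det2 a b = 1)
    (hb : 2 ≤ coordSum b) : coordSum a ≠ coordSum b := by
  intro h
  rw [det2_eq_coordSum_mul_of_coordSum_eq h] at hab
  have := Int.le_of_dvd one_pos ⟨_, hab.symm⟩
  omega

theorem eq_add_and_det2_eq_one_of_coordSum_le {a b c : ℤ × ℤ} (hab : det2 a b = 1)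
    (hbc : det2 b c = 1) (ha : 1 ≤ coordSum a) (hc : 1 ≤ coordSum c)
    (ha_le : coordSum a ≤ coordSum b) (hc_le : coordSum c ≤ coordSum b) (hb : 2 ≤ coordSum b) :
    b = a + c ∧ det2 a c = 1 := by
  have hsum := add_eq_det2_smul_of_det2_eq_one hab hbc
  have hcoord : coordSum a + coordSum c = det2 a c * coordSum b := by
    simpa [coordSum, mul_add, add_add_add_comm] using congrArg coordSum hsum
  have hne := coordSum_ne_of_det2_eq_one hab hb
  have hd : det2 a c = 1 := by
    have : 0 < det2 a c := by nlinarith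
    have : det2 a c < 2 := by nlinarith [lt_of_le_of_ne ha_le hne]
    omega
  rw [hd, one_smul] at hsum
  exact ⟨hsum.symm, hd⟩

namespace SpansFan

variable {n : ℕ} {ξ : ℕ → ℤ × ℤ}

theorem one_le_coordSum (hfan : SpansFan n ξ) {j : ℕ} (hj : j ≤ n) : 1 ≤ coordSum (ξ j) := by
  obtain ⟨hnonneg, h0, -, hdet⟩ := hfan
  rcases Nat.eq_zero_or_pos j with rfl | hjpos
  · simp [h0, coordSum]
  · have hd := hdet j hjpos hj
    have := hnonneg j hj
    unfold det2 at hd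
    unfold coordSum
    by_contra! hlt
    rw [show (ξ j).1 = 0 by omega, show (ξ j).2 = 0 by omega] at hd
    simp at hd

theorem two_le_coordSum_one (hfan : SpansFan (n + 1) ξ) (hn : 1 ≤ n) :
    2 ≤ coordSum (ξ 1) := by
  obtain ⟨hnonneg, h0, -, hdet⟩ := hfan
  have hd1 := hdet 1 le_rfl (by omega)
  have hd2 := hdet 2 (by omega) (by omega)
  have h1 := hnonneg 1 (by omega)
  have h2 := hnonneg 2 (by omega)
  simp only [Nat.sub_self, Nat.add_one_sub_one, det2, h0] at hd1 hd2
  unfold coordSum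
  nlinarith

theorem erase (hfan : SpansFan (n + 1) ξ) {i : ℕ} (hi0 : 0 < i) (hin : i ≤ n)
    (hdet : det2 (ξ (i - 1)) (ξ (i + 1)) = 1) :
    SpansFan n (fun j => if j < i then ξ j else ξ (j + 1)) := by
  obtain ⟨hnonneg, h0, hN, hdet'⟩ := hfan
  refine ⟨fun j hj => ?_, by simp [hi0, h0], by simp [hin.not_gt, hN], fun j hj1 hjn => ?_⟩
  · dsimp only
    split_ifs
    · exact hnonneg j (by omega)
    · exact hnonneg (j + 1) (by omega)
  · rcases lt_trichotomy j i with h | rfl | h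
    · simpa [show j - 1 < i by omega, h] using hdet' j hj1 (by omega)
    · simpa [show j - 1 < j by omega] using hdet
    · simpa [show ¬ j - 1 < i by omega, h.not_gt, show j - 1 + 1 = j by omega]
        using hdet' (j + 1) (by omega) (by omega)

end SpansFan

/-- If ξ₀, …, ξ_{n+1} span a fan (n ≥ 1), then some ξ_i with 0 < i < n+1 satisfies
ξ_i = ξ_{i−1} + ξ_{i+1}, and deleting ξ_i yields a sequence of n+1 vectors which
again spans a fan: every fan with n+1 cones is a subdivision of a fan with n cones. -/
theorem fan_is_subdivision (n : ℕ) (ξ : ℕ → ℤ × ℤ) (hfan : SpansFan (n + 1) ξ) (hn : 1 ≤ n) :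
    ∃ i, 0 < i ∧ i < n + 1 ∧ ξ i = ξ (i - 1) + ξ (i + 1) ∧
      SpansFan n (fun j => if j < i then ξ j else ξ (j + 1)) := by
  obtain ⟨i, hi, hmax⟩ := Finset.exists_max_image (Finset.range (n + 2))
    (fun j => coordSum (ξ j)) ⟨1, by simp⟩
  simp only [Finset.mem_range] at hi hmax
  have hi2 : 2 ≤ coordSum (ξ i) :=
    (hfan.two_le_coordSum_one hn).trans (hmax 1 (by omega))
  have hi0 : 0 < i := Nat.pos_of_ne_zero <| by
    rintro rfl
    simp [hfan.2.1, coordSum] at hi2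
  have hin : i ≤ n := Nat.le_of_lt_succ <| lt_of_le_of_ne (by omega) <| by
    rintro rfl
    simp [hfan.2.2.1, coordSum] at hi2
  obtain ⟨hsum, hdet⟩ := eq_add_and_det2_eq_one_of_coordSum_le
    (hfan.2.2.2 i hi0 (by omega))
    (by simpa using hfan.2.2.2 (i + 1) (by omega) (by omega))
    (hfan.one_le_coordSum (by omega)) (hfan.one_le_coordSum (by omega))
    (hmax _ (by omega)) (hmax _ (by omega)) hi2
  exact ⟨i, hi0, by omega, hsum, hfan.erase hi0 hin hdet⟩
end

section
/- Let f, g ∈ ℂ[[x,y]] be convenient power series. If the quotient ring ℂ[[x,y]]/(f,g) is finite-dimensional as a ℂ-vector space, then dim_ℂ ℂ[[x,y]]/(f,g) ≥ [Δ_f, Δ_g]. (With the convention that the intersection multiplicity (f,g)₀ = dim_ℂ ℂ[[x,y]]/(f,g) is +∞ when the quotient is infinite-dimensional, this says (f,g)₀ ≥ [Δ_f, Δ_g].) -/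
open MeasureTheory Pointwise

noncomputable section

/-- The ring ℂ[[x,y]] of formal power series in two variables over ℂ. -/
abbrev PS := MvPowerSeries (Fin 2) ℂ

/-- The exponent pair (i,j) as a multi-index for `MvPowerSeries (Fin 2) ℂ`. -/
def idx (p : ℕ × ℕ) : Fin 2 →₀ ℕ := Finsupp.single 0 p.1 + Finsupp.single 1 p.2

/-- The coefficient a_{ij} of x^i y^j in f. -/
def coef (f : PS) (p : ℕ × ℕ) : ℂ := MvPowerSeries.coeff (idx p) f

/-- The support of f: the set of (i,j) ∈ ℕ² with a_{ij} ≠ 0. -/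
def supp (f : PS) : Set (ℕ × ℕ) := {p | coef f p ≠ 0}

/-- f is convenient if f(x,0) ≠ 0 and f(0,y) ≠ 0. -/
def Convenient (f : PS) : Prop := (∃ i, coef f (i, 0) ≠ 0) ∧ (∃ j, coef f (0, j) ≠ 0)

/-- The Newton diagram Δ_f ⊂ ℝ²: the convex hull of ∪_{(i,j) ∈ supp f} ((i,j) + ℝ₊²). -/
def newtonDiagram (f : PS) : Set (ℝ × ℝ) :=
  convexHull ℝ (⋃ p ∈ supp f, {q : ℝ × ℝ | (p.1 : ℝ) ≤ q.1 ∧ (p.2 : ℝ) ≤ q.2})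

/-- The first quadrant ℝ₊² ⊂ ℝ². -/
def quadrant : Set (ℝ × ℝ) := {q | 0 ≤ q.1 ∧ 0 ≤ q.2}

/-- P(Δ) = Area(ℝ₊² ∖ Δ) (Lebesgue measure). -/
def areaP (Δ : Set (ℝ × ℝ)) : ℝ := (volume (quadrant \ Δ)).toReal

/-- a: the t-order of f(t,0), i.e. where Δ_f meets the horizontal axis. -/
def xOrder (f : PS) : ℕ := sInf {i | coef f (i, 0) ≠ 0}

/-- b: the t-order of f(0,t), i.e. where Δ_f meets the vertical axis. -/
def yOrder (f : PS) : ℕ := sInf {j | coef f (0, j) ≠ 0}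

/-- μ(Δ_f) = 2P(Δ_f) − a − b + 1. -/
def muNewton (f : PS) : ℝ := 2 * areaP (newtonDiagram f) - xOrder f - yOrder f + 1

/-- The Newton polygon N_f: the union of the compact faces of Δ_f, i.e. the points of Δ_f
that minimize over Δ_f some linear form with strictly positive coefficients. -/
def newtonPolygon (f : PS) : Set (ℝ × ℝ) :=
  {q | q ∈ newtonDiagram f ∧ ∃ w : ℝ × ℝ, 0 < w.1 ∧ 0 < w.2 ∧
    ∀ q' ∈ newtonDiagram f, q.1 * w.1 + q.2 * w.2 ≤ q'.1 * w.1 + q'.2 * w.2}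

/-- r(Δ_f): the number of points of ℤ² lying on the Newton polygon N_f, minus 1. -/
def rNewton (f : PS) : ℕ :=
  Nat.card {p : ℤ × ℤ // ((p.1 : ℝ), (p.2 : ℝ)) ∈ newtonPolygon f} - 1

/-- δ(Δ_f) = (μ(Δ_f) + r(Δ_f) − 1)/2. -/
def deltaNewton (f : PS) : ℝ := (muNewton f + rNewton f - 1) / 2

/-- The mixed Minkowski volume [Δ_f, Δ_g] = P(Δ_f + Δ_g) − P(Δ_f) − P(Δ_g),
where Δ_f + Δ_g is the Minkowski sum. -/
def mixedVol (f g : PS) : ℝ :=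
  areaP (newtonDiagram f + newtonDiagram g) - areaP (newtonDiagram f) - areaP (newtonDiagram g)

/-- l(f,w) = min_{(i,j) ∈ supp f} (i·w₁ + j·w₂). -/
def lFun (f : PS) (w : ℕ × ℕ) : ℕ := sInf ((fun p : ℕ × ℕ => p.1 * w.1 + p.2 * w.2) '' supp f)

/-- The part of the support of f lying on the face of Δ_f determined by the weight w. -/
def face (f : PS) (w : ℕ × ℕ) : Set (ℕ × ℕ) :=
  {p | p ∈ supp f ∧ p.1 * w.1 + p.2 * w.2 = lFun f w}

/-- The partial derivative ∂f/∂x_k of a power series in two variables. -/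
def pd (k : Fin 2) (f : PS) : PS :=
  fun d => ((d k : ℂ) + 1) * MvPowerSeries.coeff (d + Finsupp.single k 1) f

/-- f is Newton nondegenerate: for every compact face γ of Δ_f (the faces of Δ_f cut out
by a weight w with strictly positive coordinates), the system
x·∂f_γ/∂x = y·∂f_γ/∂y = 0 has no solution in (ℂ∖{0})². -/
def NewtonND (f : PS) : Prop :=
  ∀ w : ℕ × ℕ, 1 ≤ w.1 → 1 ≤ w.2 →
    ¬ ∃ x y : ℂ, x ≠ 0 ∧ y ≠ 0 ∧
      (∑ᶠ p ∈ face f w, (p.1 : ℂ) * coef f p * x ^ p.1 * y ^ p.2) = 0 ∧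
      (∑ᶠ p ∈ face f w, (p.2 : ℂ) * coef f p * x ^ p.1 * y ^ p.2) = 0

/-- The pair (f,g) is nondegenerate: for every w ∈ ℕ² ∖ {(0,0)} the system
f_w = g_w = 0 has no solution in (ℂ∖{0})². -/
def PairND (f g : PS) : Prop :=
  ∀ w : ℕ × ℕ, w ≠ (0, 0) →
    ¬ ∃ x y : ℂ, x ≠ 0 ∧ y ≠ 0 ∧
      (∑ᶠ p ∈ face f w, coef f p * x ^ p.1 * y ^ p.2) = 0 ∧
      (∑ᶠ p ∈ face g w, coef g p * x ^ p.1 * y ^ p.2) = 0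

/-!
For `t ∈ [0,1)²` let `A_t`, `B_t`, `C_t` be the sets of lattice points `p` with `p + t` outside
`Δ_f`, `Δ_g` and `Δ_f + Δ_g` respectively. If no monomial of `u` lies in `B_t`, then no monomial
of `u f` lies in `C_t`, and likewise for `v g` and `A_t`. So on `C_t` the coefficients of any
`u f + v g ∈ (f, g)` are those of `u' f + v' g` with `u'`, `v'` supported on `B_t`, `A_t`: the
image of `(f, g)` in `ℂ^{C_t}` has dimension at most `#A_t + #B_t`, whence
`#C_t ≤ #A_t + #B_t + dim ℂ[[x,y]]/(f,g)`. Integrating over `t` turns the three counts into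
`P(Δ_f + Δ_g)`, `P(Δ_f)` and `P(Δ_g)`.
-/

open Module
open scoped ENNReal

@[simp] lemma idx_apply_zero (p : ℕ × ℕ) : idx p 0 = p.1 := by simp [idx]

@[simp] lemma idx_apply_one (p : ℕ × ℕ) : idx p 1 = p.2 := by simp [idx]

lemma idx_apply_zero_apply_one (d : Fin 2 →₀ ℕ) : idx (d 0, d 1) = d := by
  ext k; fin_cases k <;> simp

lemma idx_injective : Function.Injective idx := fun p q h => by
  simpa [Prod.ext_iff] using And.intro (congr($h 0)) (congr($h 1))

lemma supp_mul_subset (u w : PS) : supp (u * w) ⊆ supp u + supp w := by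
  intro p (hp : coef (u * w) p ≠ 0)
  rw [coef, MvPowerSeries.coeff_mul] at hp
  obtain ⟨⟨d, e⟩, hde, hne⟩ := Finset.exists_ne_zero_of_sum_ne_zero hp
  rw [Finset.HasAntidiagonal.mem_antidiagonal] at hde
  refine ⟨(d 0, d 1), ?_, (e 0, e 1), ?_, ?_⟩
  · simpa [supp, coef, idx_apply_zero_apply_one] using left_ne_zero_of_mul hne
  · simpa [supp, coef, idx_apply_zero_apply_one] using right_ne_zero_of_mul hne
  · simp [Prod.ext_iff, ← idx_apply_zero p, ← idx_apply_one p, ← hde]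

def extendByZero (S : Finset (ℕ × ℕ)) : (S → ℂ) →ₗ[ℂ] PS :=
  Fintype.linearCombination ℂ fun p => MvPowerSeries.monomial (idx p) 1

lemma coef_extendByZero (S : Finset (ℕ × ℕ)) (φ : S → ℂ) (p : ℕ × ℕ) :
    coef (extendByZero S φ) p = if h : p ∈ S then φ ⟨p, h⟩ else 0 := by
  simp [coef, extendByZero, Fintype.linearCombination_apply, MvPowerSeries.coeff_monomial,
    idx_injective.eq_iff]
  split_ifs with h
  · rw [Finset.sum_eq_single_of_mem ⟨p, h⟩ (Finset.mem_attach _ _)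
      fun b _ hb => if_neg fun e => hb (Subtype.ext e.symm), if_pos rfl]
  · exact Finset.sum_eq_zero fun b _ => if_neg fun (e : p = b) => h (e ▸ b.2)

def coefProj (S : Finset (ℕ × ℕ)) : PS →ₗ[ℂ] (S → ℂ) :=
  LinearMap.pi fun p => MvPowerSeries.coeff (idx p)

@[simp] lemma coefProj_apply (S : Finset (ℕ × ℕ)) (u : PS) (p : S) : coefProj S u p = coef u p :=
  rfl

lemma coefProj_extendByZero (S : Finset (ℕ × ℕ)) (φ : S → ℂ) :
    coefProj S (extendByZero S φ) = φ :=
  funext fun p => by simp [coef_extendByZero]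

lemma coefProj_surjective (S : Finset (ℕ × ℕ)) : Function.Surjective (coefProj S) :=
  fun φ => ⟨_, coefProj_extendByZero S φ⟩

lemma supp_sub_extendByZero_coefProj_subset (S : Finset (ℕ × ℕ)) (u : PS) :
    supp (u - extendByZero S (coefProj S u)) ⊆ (↑S)ᶜ := by
  intro p hp hpS
  apply hp
  rw [coef, map_sub, ← coef, ← coef, coef_extendByZero, dif_pos (Finset.mem_coe.1 hpS),
    coefProj_apply, sub_self]

lemma coefProj_mul_eq_zero {u w : PS} {C : Finset (ℕ × ℕ)} (h : supp u + supp w ⊆ (↑C)ᶜ) :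
    coefProj C (u * w) = 0 :=
  funext fun p => by_contra fun hp => h (supp_mul_subset u w hp) p.2

theorem finrank_le_finrank_map_add_finrank_quotient {K V W : Type*} [Field K] [AddCommGroup V]
    [Module K V] [AddCommGroup W] [Module K W] [FiniteDimensional K W] {π : V →ₗ[K] W}
    (hπ : Function.Surjective π) (I : Submodule K V) [FiniteDimensional K (V ⧸ I)] :
    finrank K W ≤ finrank K (I.map π) + finrank K (V ⧸ I) := by
  have hq : Function.Surjective (I.mapQ (I.map π) π (Submodule.le_comap_map π I)) := by
    intro w
    obtain ⟨w, rfl⟩ := Submodule.mkQ_surjective _ w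
    obtain ⟨v, rfl⟩ := hπ w
    exact ⟨Submodule.Quotient.mk v, rfl⟩
  have := LinearMap.finrank_le_finrank_of_surjective hq
  have := (I.map π).finrank_quotient_add_finrank
  omega

theorem card_le_card_add_card_add_finrank (f g : PS)
    [FiniteDimensional ℂ (PS ⧸ Ideal.span {f, g})] {A B C : Finset (ℕ × ℕ)}
    (hA : (↑A)ᶜ + supp g ⊆ (↑C)ᶜ) (hB : (↑B)ᶜ + supp f ⊆ (↑C)ᶜ) :
    C.card ≤ A.card + B.card + finrank ℂ (PS ⧸ Ideal.span {f, g}) := by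
  set I := (Ideal.span {f, g}).restrictScalars ℂ
  set ψ : (A → ℂ) × (B → ℂ) →ₗ[ℂ] (C → ℂ) := coefProj C ∘ₗ
    ((LinearMap.mulRight ℂ g ∘ₗ extendByZero A).coprod (LinearMap.mulRight ℂ f ∘ₗ extendByZero B))
  have hI : I.map (coefProj C) ≤ LinearMap.range ψ := by
    rintro _ ⟨h, hh, rfl⟩
    obtain ⟨u, v, rfl⟩ := Ideal.mem_span_pair.mp hh
    refine ⟨(coefProj A v, coefProj B u), ?_⟩
    have hu := coefProj_mul_eq_zero (w := f)
      ((Set.add_subset_add_right (supp_sub_extendByZero_coefProj_subset B u)).trans hB)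
    have hv := coefProj_mul_eq_zero (w := g)
      ((Set.add_subset_add_right (supp_sub_extendByZero_coefProj_subset A v)).trans hA)
    rw [sub_mul, map_sub, sub_eq_zero] at hu hv
    simp [ψ, hu, hv, add_comm]
  have e : (PS ⧸ I) ≃ₗ[ℂ] PS ⧸ Ideal.span {f, g} :=
    Submodule.Quotient.restrictScalarsEquiv ℂ _
  have := e.symm.finiteDimensional
  calc C.card = finrank ℂ (C → ℂ) := by simp
    _ ≤ finrank ℂ (I.map (coefProj C)) + finrank ℂ (PS ⧸ I) :=
      finrank_le_finrank_map_add_finrank_quotient (coefProj_surjective C) I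
    _ ≤ finrank ℂ ((A → ℂ) × (B → ℂ)) + finrank ℂ (PS ⧸ Ideal.span {f, g}) :=
      add_le_add ((Submodule.finrank_mono hI).trans (LinearMap.finrank_range_le ψ))
        e.finrank_eq.le
    _ = _ := by simp [add_assoc]

theorem encard_le_encard_add_encard_add_finrank (f g : PS)
    [FiniteDimensional ℂ (PS ⧸ Ideal.span {f, g})] {A B C : Set (ℕ × ℕ)}
    (hA : Aᶜ + supp g ⊆ Cᶜ) (hB : Bᶜ + supp f ⊆ Cᶜ) :
    C.encard ≤ A.encard + B.encard + finrank ℂ (PS ⧸ Ideal.span {f, g}) := by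
  rcases A.finite_or_infinite with hAfin | hAinf
  swap; · simp [hAinf.encard_eq]
  rcases B.finite_or_infinite with hBfin | hBinf
  swap; · simp [hBinf.encard_eq]
  rw [hAfin.encard_eq_coe_toFinset_card, hBfin.encard_eq_coe_toFinset_card]
  by_contra! hlt
  obtain ⟨C', hC'C, hC'⟩ := Set.exists_subset_encard_eq (Order.add_one_le_of_lt hlt)
  have hC'fin : C'.Finite := Set.finite_of_encard_eq_coe hC'
  have hcompl : Cᶜ ⊆ C'ᶜ := Set.compl_subset_compl.2 hC'C
  have := card_le_card_add_card_add_finrank f g (A := hAfin.toFinset) (B := hBfin.toFinset)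
    (C := hC'fin.toFinset) (by simpa using hA.trans hcompl) (by simpa using hB.trans hcompl)
  rw [hC'fin.encard_eq_coe_toFinset_card] at hC'
  norm_cast at hC'
  omega

theorem IsUpperSet.convexHull {𝕜 E : Type*} [Ring 𝕜] [PartialOrder 𝕜] [AddCommGroup E]
    [PartialOrder E] [IsOrderedAddMonoid E] [Module 𝕜 E] {s : Set E} (hs : IsUpperSet s) :
    IsUpperSet (_root_.convexHull 𝕜 s) := by
  intro x y hxy hx
  have hs' : (y - x) +ᵥ s ⊆ s := by
    rintro _ ⟨z, hz, rfl⟩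
    exact hs (le_add_of_nonneg_left (sub_nonneg.2 hxy)) hz
  have hy : y ∈ (y - x) +ᵥ _root_.convexHull 𝕜 s := ⟨x, hx, by simp⟩
  rw [← convexHull_vadd] at hy
  exact convexHull_mono hs' hy

lemma isUpperSet_newtonDiagram (f : PS) : IsUpperSet (newtonDiagram f) :=
  IsUpperSet.convexHull <| isUpperSet_iUnion₂ fun _ _ _ _ hab ha =>
    ⟨ha.1.trans hab.1, ha.2.trans hab.2⟩

def realPt (p : ℕ × ℕ) : ℝ × ℝ := (p.1, p.2)

@[simp] lemma realPt_add (p q : ℕ × ℕ) : realPt (p + q) = realPt p + realPt q := by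
  simp [realPt]

lemma realPt_mem_newtonDiagram {f : PS} {p : ℕ × ℕ} (hp : p ∈ supp f) :
    realPt p ∈ newtonDiagram f :=
  subset_convexHull ℝ _ (Set.mem_biUnion hp ⟨le_rfl, le_rfl⟩)

lemma IsUpperSet.quadrant_diff_subset_Icc {X : Set (ℝ × ℝ)} (hX : IsUpperSet X) {a b : ℝ}
    (ha : (a, 0) ∈ X) (hb : (0, b) ∈ X) : quadrant \ X ⊆ Set.Icc 0 (a, b) := by
  rintro q ⟨hq, hqX⟩
  refine ⟨hq, ?_, ?_⟩
  · by_contra h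
    exact hqX (hX (show (a, 0) ≤ q from ⟨(not_le.1 h).le, hq.2⟩) ha)
  · by_contra h
    exact hqX (hX (show (0, b) ≤ q from ⟨hq.1, (not_le.1 h).le⟩) hb)

lemma Convenient.volume_quadrant_diff_ne_top {f : PS} (hf : Convenient f) :
    volume (quadrant \ newtonDiagram f) ≠ ⊤ := by
  obtain ⟨⟨i, hi⟩, ⟨j, hj⟩⟩ := hf
  have hsub := (isUpperSet_newtonDiagram f).quadrant_diff_subset_Icc
    (by simpa [realPt] using realPt_mem_newtonDiagram (p := (i, 0)) hi)
    (by simpa [realPt] using realPt_mem_newtonDiagram (p := (0, j)) hj)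
  exact ((measure_mono hsub).trans_lt measure_Icc_lt_top).ne

def unitCell : Set (ℝ × ℝ) := Set.Ico 0 1 ×ˢ Set.Ico 0 1

def latticeGap (X : Set (ℝ × ℝ)) (t : ℝ × ℝ) : Set (ℕ × ℕ) := {p | realPt p + t ∉ X}

lemma measurableSet_unitCell : MeasurableSet unitCell :=
  measurableSet_Ico.prod measurableSet_Ico

lemma volume_unitCell : volume unitCell = 1 := by
  simp [unitCell, Measure.volume_eq_prod, Measure.prod_prod]

lemma sub_natCast_mem_Ico_iff {x : ℝ} {n : ℕ} : x - n ∈ Set.Ico 0 1 ↔ 0 ≤ x ∧ n = ⌊x⌋₊ := by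
  rw [Set.mem_Ico, sub_nonneg, sub_lt_iff_lt_add']
  constructor
  · rintro ⟨h₁, h₂⟩
    have hx : 0 ≤ x := n.cast_nonneg.trans h₁
    exact ⟨hx, ((Nat.floor_eq_iff hx).2 ⟨h₁, by linarith⟩).symm⟩
  · rintro ⟨hx, rfl⟩
    exact ⟨Nat.floor_le hx, by linarith [Nat.lt_floor_add_one x]⟩

lemma sub_realPt_mem_unitCell_iff {q : ℝ × ℝ} {p : ℕ × ℕ} :
    q - realPt p ∈ unitCell ↔ q ∈ quadrant ∧ p = (⌊q.1⌋₊, ⌊q.2⌋₊) := by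
  simp only [unitCell, realPt, Set.mem_prod, Prod.fst_sub, Prod.snd_sub, sub_natCast_mem_Ico_iff,
    quadrant, Set.mem_ofPred_eq, Prod.ext_iff]
  tauto

lemma quadrant_diff_eq_iUnion (X : Set (ℝ × ℝ)) :
    quadrant \ X = ⋃ p : ℕ × ℕ, (· - realPt p) ⁻¹' unitCell \ X := by
  ext q
  simp [sub_realPt_mem_unitCell_iff]

lemma pairwise_disjoint_preimage_unitCell :
    Pairwise (Function.onFun Disjoint fun p : ℕ × ℕ => (· - realPt p) ⁻¹' unitCell) := by
  intro p p' hne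
  refine Set.disjoint_left.2 fun q hp hp' => hne ?_
  rw [Set.mem_preimage, sub_realPt_mem_unitCell_iff] at hp hp'
  exact hp.2.trans hp'.2.symm

lemma encard_latticeGap_eq_tsum (X : Set (ℝ × ℝ)) (t : ℝ × ℝ) :
    ((latticeGap X t).encard : ℝ≥0∞) = ∑' p, ((realPt p + ·) ⁻¹' Xᶜ).indicator 1 t := by
  rw [← ENNReal.tsum_set_one]
  refine (tsum_subtype _ fun _ => 1).trans (tsum_congr fun p => ?_)
  by_cases h : realPt p + t ∈ X <;> simp [latticeGap, h]

section

variable {X : Set (ℝ × ℝ)}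

lemma nullMeasurableSet_preimage_add_compl (hX : NullMeasurableSet X) (v : ℝ × ℝ) :
    NullMeasurableSet ((v + ·) ⁻¹' Xᶜ) :=
  hX.compl.preimage (measurePreserving_add_left volume v).quasiMeasurePreserving

lemma aemeasurable_encard_latticeGap (hX : NullMeasurableSet X) :
    AEMeasurable fun t => ((latticeGap X t).encard : ℝ≥0∞) := by
  simp_rw [encard_latticeGap_eq_tsum]
  exact AEMeasurable.tsum fun p =>
    aemeasurable_one.indicator₀ (nullMeasurableSet_preimage_add_compl hX _)

lemma volume_quadrant_diff_eq_lintegral (hX : NullMeasurableSet X) :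
    volume (quadrant \ X) = ∫⁻ t in unitCell, ((latticeGap X t).encard : ℝ≥0∞) := by
  have hmeas p := nullMeasurableSet_preimage_add_compl hX (realPt p)
  simp_rw [encard_latticeGap_eq_tsum]
  rw [lintegral_tsum (f := fun p t => ((realPt p + ·) ⁻¹' Xᶜ).indicator 1 t)
      fun p => (aemeasurable_one.indicator₀ (hmeas p)).restrict,
    quadrant_diff_eq_iUnion, measure_iUnion₀
      (pairwise_disjoint_preimage_unitCell.mono fun _ _ h =>
        (h.mono Set.sdiff_subset Set.sdiff_subset).aedisjoint)
      fun p =>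
        (measurableSet_unitCell.preimage (measurable_sub_const _)).nullMeasurableSet.diff hX]
  refine tsum_congr fun p => ?_
  rw [lintegral_indicator_one₀ ((hmeas p).mono_ac Measure.restrict_le_self.absolutelyContinuous),
    Measure.restrict_apply' measurableSet_unitCell, ← measure_preimage_add volume (realPt p)]
  congr 1
  ext t
  simp [and_comm]

lemma volume_quadrant_diff_le_of_encard_le {Y Z : Set (ℝ × ℝ)} (hX : NullMeasurableSet X)
    (hY : NullMeasurableSet Y) (hZ : NullMeasurableSet Z) {n : ℕ}
    (h : ∀ t, (latticeGap Z t).encard ≤ (latticeGap X t).encard + (latticeGap Y t).encard + n) :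
    volume (quadrant \ Z) ≤ volume (quadrant \ X) + volume (quadrant \ Y) + n := by
  rw [volume_quadrant_diff_eq_lintegral hX, volume_quadrant_diff_eq_lintegral hY,
    volume_quadrant_diff_eq_lintegral hZ]
  calc ∫⁻ t in unitCell, ((latticeGap Z t).encard : ℝ≥0∞)
      ≤ ∫⁻ t in unitCell, (((latticeGap X t).encard : ℝ≥0∞) + (latticeGap Y t).encard + n) :=
        lintegral_mono fun t => by simpa using ENat.toENNReal_le.2 (h t)
    _ = _ := by
      rw [lintegral_add_right _ measurable_const,
        lintegral_add_left' (aemeasurable_encard_latticeGap hX).restrict, setLIntegral_const,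
        volume_unitCell, mul_one]

end

lemma compl_latticeGap_add_subset {X Y : Set (ℝ × ℝ)} {T : Set (ℕ × ℕ)}
    (hT : ∀ s ∈ T, realPt s ∈ Y) (t : ℝ × ℝ) :
    (latticeGap X t)ᶜ + T ⊆ (latticeGap (X + Y) t)ᶜ := by
  rintro _ ⟨r, hr, s, hs, rfl⟩
  simp only [latticeGap, Set.mem_compl_iff, Set.mem_ofPred_eq, not_not] at hr ⊢
  rw [realPt_add, add_right_comm]
  exact Set.add_mem_add hr (hT s hs)

lemma encard_latticeGap_add_le (f g : PS) [FiniteDimensional ℂ (PS ⧸ Ideal.span {f, g})]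
    (t : ℝ × ℝ) :
    (latticeGap (newtonDiagram f + newtonDiagram g) t).encard ≤
      (latticeGap (newtonDiagram f) t).encard + (latticeGap (newtonDiagram g) t).encard +
        finrank ℂ (PS ⧸ Ideal.span {f, g}) :=
  encard_le_encard_add_encard_add_finrank f g
    (compl_latticeGap_add_subset (fun _ => realPt_mem_newtonDiagram) t)
    (add_comm (newtonDiagram f) _ ▸
      compl_latticeGap_add_subset (fun _ => realPt_mem_newtonDiagram) t)

lemma convex_newtonDiagram (f : PS) : Convex ℝ (newtonDiagram f) :=
  convex_convexHull ℝ _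

/-- Kouchnirenko-type inequality for the intersection multiplicity: for convenient f, g,
(f,g)₀ = dim_ℂ ℂ[[x,y]]/(f,g) ≥ [Δ_f, Δ_g] whenever the quotient is finite-dimensional. -/
theorem intersection_ge_mixedVol (f g : PS) (hf : Convenient f) (hg : Convenient g)
    (hfin : FiniteDimensional ℂ (PS ⧸ Ideal.span {f, g})) :
    mixedVol f g ≤ (Module.finrank ℂ (PS ⧸ Ideal.span {f, g}) : ℝ) := by
  have hvol := volume_quadrant_diff_le_of_encard_le
    ((convex_newtonDiagram f).nullMeasurableSet volume)
    ((convex_newtonDiagram g).nullMeasurableSet volume)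
    (((convex_newtonDiagram f).add (convex_newtonDiagram g)).nullMeasurableSet volume)
    (encard_latticeGap_add_le f g)
  have hf' := hf.volume_quadrant_diff_ne_top
  have hg' := hg.volume_quadrant_diff_ne_top
  have h := ENNReal.toReal_le_add hvol (ENNReal.add_ne_top.2 ⟨hf', hg'⟩) (ENNReal.natCast_ne_top _)
  rw [ENNReal.toReal_add hf' hg', ENNReal.toReal_natCast] at h
  rw [mixedVol, areaP, areaP, areaP]
  linarith

end
end
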